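/- arXiv:1802.02751 — 3 statements merged into one kernel-verified Lean document; each statement's English description precedes it below -/
import Mathlib

section
/- Let x₁, …, x_n be independent real-valued random variables such that Pr[0 ≤ x₁ ≤ x₂ ≤ ⋯ ≤ x_n] ≥ 1 − ε, and for each i let α_i be a median of x_i (with α₀ = 0 and α_{n+1} = +∞). Then Pr[for every index i with 2i+1 ≤ n, x_{2i+1} ∈ [α_{2i}, α_{2i+2}]] ≥ 1 − 2ε. -/
/-!
Let `M` be the event `0 ≤ x₁ ≤ ⋯ ≤ xₙ`. A violation `x_{2j+1} < α_{2j}` together with `M` forces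
`x_{2j} < α_{2j}` (for `j = 0` it contradicts `0 ≤ x₁`), and a violation `x_{2j+1} > α_{2j+2}`
forces `x_{2j+2} > α_{2j+2}`; each of these has probability at most `1/2` by the median property
and is independent of the odd-indexed variables. Hence, conditioned on any event generated by the
odd-indexed variables and contained in a violation, `M` has probability at most `1/2`. This
property survives countable unions (split along the first violation), so for the union `V` of
all violations `μ (V ∩ M) ≤ μ V / 2`, whence `μ V ≤ μ (V ∩ M) + μ Mᶜ ≤ μ V / 2 + ε`, i.e.
`μ V ≤ 2 ε`.
-/

open MeasureTheory ProbabilityTheory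
open scoped ENNReal

section CondProbLeHalf

variable {Ω : Type*} {m : MeasurableSpace Ω} {μ : Measure Ω} {𝓞 : MeasurableSpace Ω}
  {M A B : Set Ω}

/-- `μ (M | D) ≤ 1 / 2` for every `𝓞`-measurable `D ⊆ A`, written without division so that
null events `D` need no special treatment. -/
def CondProbLeHalf (μ : Measure Ω) (𝓞 : MeasurableSpace Ω) (M A : Set Ω) : Prop :=
  ∀ D, MeasurableSet[𝓞] D → D ⊆ A → 2 * μ (D ∩ M) ≤ μ D

lemma condProbLeHalf_of_disjoint (h : Disjoint A M) : CondProbLeHalf μ 𝓞 M A := by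
  intro D _ hDA
  rw [Set.disjoint_iff_inter_eq_empty.1 (h.mono_left hDA), measure_empty, mul_zero]
  exact zero_le

lemma condProbLeHalf_of_indep {𝓒 : MeasurableSpace Ω} {C : Set Ω} (hind : Indep 𝓞 𝓒 μ)
    (hC : MeasurableSet[𝓒] C) (hCμ : μ C ≤ 1 / 2) (hAMC : A ∩ M ⊆ C) :
    CondProbLeHalf μ 𝓞 M A := by
  intro D hD hDA
  have hDMC : D ∩ M ⊆ D ∩ C := fun ω hω => ⟨hω.1, hAMC ⟨hDA hω.1, hω.2⟩⟩
  calc 2 * μ (D ∩ M) ≤ 2 * μ (D ∩ C) := by gcongr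
    _ = μ D * (2 * μ C) := by rw [(Indep_iff _ _ _).1 hind D C hD hC]; ring
    _ ≤ μ D := by
        refine mul_le_of_le_one_right' ?_
        calc 2 * μ C ≤ 2 * (1 / 2) := by gcongr
          _ = 1 := ENNReal.mul_div_cancel two_ne_zero ENNReal.ofNat_ne_top

lemma CondProbLeHalf.union (h𝓞 : 𝓞 ≤ m) (hA : MeasurableSet[𝓞] A)
    (hMA : CondProbLeHalf μ 𝓞 M A) (hMB : CondProbLeHalf μ 𝓞 M B) :
    CondProbLeHalf μ 𝓞 M (A ∪ B) := by
  intro D hD hDAB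
  calc 2 * μ (D ∩ M) = 2 * (μ (D ∩ A ∩ M) + μ ((D \ A) ∩ M)) := by
        rw [Set.inter_right_comm D A M, ← Set.inter_sdiff_right_comm,
          measure_inter_add_sdiff _ (h𝓞 _ hA)]
    _ = 2 * μ (D ∩ A ∩ M) + 2 * μ ((D \ A) ∩ M) := mul_add _ _ _
    _ ≤ μ (D ∩ A) + μ (D \ A) :=
        add_le_add (hMA _ (hD.inter hA) Set.inter_subset_right)
          (hMB _ (hD.diff hA) fun ω hω => (hDAB hω.1).resolve_left hω.2)
    _ = μ D := measure_inter_add_sdiff D (h𝓞 _ hA)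

lemma CondProbLeHalf.iUnion (h𝓞 : 𝓞 ≤ m) {A : ℕ → Set Ω} (hA : ∀ i, MeasurableSet[𝓞] (A i))
    (h : ∀ i, CondProbLeHalf μ 𝓞 M (A i)) : CondProbLeHalf μ 𝓞 M (⋃ i, A i) := by
  intro D hD hDA
  set E : ℕ → Set Ω := fun i => D ∩ disjointed A i
  have hE : ∀ i, MeasurableSet[𝓞] (E i) := fun i => hD.inter (MeasurableSet.disjointed hA i)
  have hDE : D = ⋃ i, E i := by
    rw [← Set.inter_iUnion, iUnion_disjointed, Set.inter_eq_left.2 hDA]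
  have hEdisj : Pairwise (Function.onFun Disjoint E) :=
    fun i j hij => ((disjoint_disjointed A) hij).mono Set.inter_subset_right Set.inter_subset_right
  calc 2 * μ (D ∩ M) ≤ 2 * ∑' i, μ (E i ∩ M) := by
        rw [hDE, Set.iUnion_inter]; gcongr; exact measure_iUnion_le _
    _ = ∑' i, 2 * μ (E i ∩ M) := ENNReal.tsum_mul_left.symm
    _ ≤ ∑' i, μ (E i) := ENNReal.tsum_le_tsum fun i =>
        h i _ (hE i) (Set.inter_subset_right.trans (disjointed_subset A i))
    _ = μ D := by rw [hDE, measure_iUnion hEdisj fun i => h𝓞 _ (hE i)]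

lemma CondProbLeHalf.measure_le [IsFiniteMeasure μ] (h : CondProbLeHalf μ 𝓞 M A)
    (hA : MeasurableSet[𝓞] A) : μ A ≤ 2 * μ Mᶜ := by
  have h2 : 2 * μ A ≤ μ A + 2 * μ Mᶜ :=
    calc 2 * μ A ≤ 2 * (μ (A ∩ M) + μ Mᶜ) := by
          gcongr
          exact (measure_le_inter_add_sdiff μ A M).trans
            (add_le_add_right (measure_mono (Set.sdiff_subset_compl A M)) _)
      _ = 2 * μ (A ∩ M) + 2 * μ Mᶜ := mul_add _ _ _
      _ ≤ μ A + 2 * μ Mᶜ := by gcongr; exact h A hA subset_rfl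
  rw [two_mul] at h2
  exact ENNReal.le_of_add_le_add_left (measure_ne_top μ A) h2

end CondProbLeHalf

lemma measure_compl_le_half {Ω : Type*} {m : MeasurableSpace Ω} {μ : Measure Ω}
    [IsProbabilityMeasure μ] {s : Set Ω} (hs : MeasurableSet s) (h : 1 / 2 ≤ μ s) :
    μ sᶜ ≤ 1 / 2 := by
  rw [prob_compl_eq_one_sub hs, tsub_le_iff_right]
  calc (1 : ℝ≥0∞) = 1 / 2 + 1 / 2 := (ENNReal.add_halves 1).symm
    _ ≤ 1 / 2 + μ s := by gcongr

section OrderedSample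

variable {Ω : Type*} {m : MeasurableSpace Ω} {μ : Measure Ω} (x : ℕ → Ω → ℝ) (α : ℕ → ℝ) (n : ℕ)

def monotoneEvent : Set Ω := {ω | 0 ≤ x 1 ω ∧ ∀ i, 1 ≤ i → i < n → x i ω ≤ x (i + 1) ω}

abbrev oddSigma : MeasurableSpace Ω := ⨆ k ∈ {k | Odd k}, MeasurableSpace.comap (x k) inferInstance

variable {x}

lemma measurableSet_monotoneEvent (hmeas : ∀ i, Measurable (x i)) :
    MeasurableSet (monotoneEvent x n) := by
  simp only [monotoneEvent, Set.ofPred_and, Set.ofPred_forall]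
  measurability

lemma oddSigma_le (hmeas : ∀ i, Measurable (x i)) : oddSigma x ≤ m :=
  iSup₂_le fun k _ => (hmeas k).comap_le

lemma measurable_oddSigma {k : ℕ} (hk : Odd k) : Measurable[oddSigma x] (x k) :=
  Measurable.of_comap_le (le_iSup₂ (f := fun k (_ : k ∈ {k | Odd k}) =>
    MeasurableSpace.comap (x k) inferInstance) k hk)

lemma indep_oddSigma_comap (hmeas : ∀ i, Measurable (x i)) (hindep : iIndepFun x μ) {k : ℕ}
    (hk : Even k) : Indep (oddSigma x) (MeasurableSpace.comap (x k) inferInstance) μ := by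
  refine indep_of_indep_of_le_right (indep_iSup_of_disjoint (fun i => (hmeas i).comap_le)
    ((iIndepFun_iff_iIndep _ _ _).1 hindep) (S := {k | Odd k}) (T := {k}) ?_) ?_
  · simpa using Nat.not_odd_iff_even.2 hk
  · exact le_iSup₂ (f := fun i (_ : i ∈ ({k} : Set ℕ)) =>
      MeasurableSpace.comap (x i) inferInstance) k rfl

lemma measurableSet_low (j : ℕ) :
    MeasurableSet[oddSigma x] {ω | 2 * j + 1 ≤ n ∧ x (2 * j + 1) ω < α (2 * j)} :=
  (MeasurableSet.const _).inter (measurableSet_lt (measurable_oddSigma (odd_two_mul_add_one j))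
    measurable_const)

lemma measurableSet_high (j : ℕ) :
    MeasurableSet[oddSigma x] {ω | 2 * j + 2 ≤ n ∧ α (2 * j + 2) < x (2 * j + 1) ω} :=
  (MeasurableSet.const _).inter (measurableSet_lt measurable_const
    (measurable_oddSigma (odd_two_mul_add_one j)))

variable [IsProbabilityMeasure μ]

lemma condProbLeHalf_low (hmeas : ∀ i, Measurable (x i)) (hindep : iIndepFun x μ)
    (hα0 : α 0 = 0) (hmed : ∀ i, 1 ≤ i → i ≤ n → μ {ω | α i ≤ x i ω} ≥ 1 / 2) (j : ℕ) :
    CondProbLeHalf μ (oddSigma x) (monotoneEvent x n)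
      {ω | 2 * j + 1 ≤ n ∧ x (2 * j + 1) ω < α (2 * j)} := by
  by_cases hj : 2 * j + 1 ≤ n ∧ 0 < j
  · refine condProbLeHalf_of_indep (indep_oddSigma_comap hmeas hindep (even_two_mul j))
      (C := {ω | x (2 * j) ω < α (2 * j)}) (measurableSet_lt (comap_measurable _) measurable_const)
      ?_ ?_
    · simpa only [Set.compl_ofPred, not_le] using measure_compl_le_half
        (measurableSet_le measurable_const (hmeas _)) (hmed (2 * j) (by omega) (by omega))
    · rintro ω ⟨⟨-, hlow⟩, -, hmono⟩
      exact (hmono (2 * j) (by omega) (by omega)).trans_lt hlow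
  · refine condProbLeHalf_of_disjoint (Set.disjoint_left.2 fun ω ⟨hjn, hlow⟩ ⟨hpos, _⟩ => ?_)
    obtain rfl : j = 0 := by omega
    exact absurd hpos (by simpa [hα0] using hlow)

lemma condProbLeHalf_high (hmeas : ∀ i, Measurable (x i)) (hindep : iIndepFun x μ)
    (hmed : ∀ i, 1 ≤ i → i ≤ n → μ {ω | x i ω ≤ α i} ≥ 1 / 2) (j : ℕ) :
    CondProbLeHalf μ (oddSigma x) (monotoneEvent x n)
      {ω | 2 * j + 2 ≤ n ∧ α (2 * j + 2) < x (2 * j + 1) ω} := by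
  by_cases hj : 2 * j + 2 ≤ n
  · refine condProbLeHalf_of_indep
      (indep_oddSigma_comap hmeas hindep (k := 2 * j + 2) ⟨j + 1, by ring⟩)
      (C := {ω | α (2 * j + 2) < x (2 * j + 2) ω})
      (measurableSet_lt measurable_const (comap_measurable _)) ?_ ?_
    · simpa only [Set.compl_ofPred, not_le] using measure_compl_le_half
        (measurableSet_le (hmeas _) measurable_const) (hmed (2 * j + 2) (by omega) hj)
    · rintro ω ⟨⟨-, hhigh⟩, -, hmono⟩
      exact hhigh.trans_le (hmono (2 * j + 1) (by omega) (by omega))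
  · exact condProbLeHalf_of_disjoint (Set.disjoint_left.2 fun ω ⟨hjn, _⟩ _ => hj hjn)

end OrderedSample

theorem stmt_7_general {Ω : Type*} [MeasurableSpace Ω] (μ : Measure Ω) [IsProbabilityMeasure μ]
    (n : ℕ) (x : ℕ → Ω → ℝ) (hmeas : ∀ i, Measurable (x i))
    (hindep : iIndepFun x μ)
    (ε : ℝ≥0∞)
    (hmonot : μ {ω | 0 ≤ x 1 ω ∧ ∀ i, 1 ≤ i → i < n → x i ω ≤ x (i + 1) ω} ≥ 1 - ε)
    (α : ℕ → ℝ) (hα0 : α 0 = 0)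
    (hmed : ∀ i, 1 ≤ i → i ≤ n →
      μ {ω | α i ≤ x i ω} ≥ 1 / 2 ∧ μ {ω | x i ω ≤ α i} ≥ 1 / 2) :
    μ {ω | ∀ i : ℕ, 2 * i + 1 ≤ n →
        α (2 * i) ≤ x (2 * i + 1) ω ∧ (2 * i + 2 ≤ n → x (2 * i + 1) ω ≤ α (2 * i + 2))}
      ≥ 1 - 2 * ε := by
  set bad := (⋃ j, {ω | 2 * j + 1 ≤ n ∧ x (2 * j + 1) ω < α (2 * j)}) ∪
    ⋃ j, {ω | 2 * j + 2 ≤ n ∧ α (2 * j + 2) < x (2 * j + 1) ω}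
  have hbad : MeasurableSet[oddSigma x] bad :=
    (MeasurableSet.iUnion (measurableSet_low α n)).union
      (MeasurableSet.iUnion (measurableSet_high α n))
  have hhalf : CondProbLeHalf μ (oddSigma x) (monotoneEvent x n) bad :=
    (CondProbLeHalf.iUnion (oddSigma_le hmeas) (measurableSet_low α n)
      (condProbLeHalf_low α n hmeas hindep hα0 fun i h1 h2 => (hmed i h1 h2).1)).union
      (oddSigma_le hmeas) (MeasurableSet.iUnion (measurableSet_low α n))
      (CondProbLeHalf.iUnion (oddSigma_le hmeas) (measurableSet_high α n)
        (condProbLeHalf_high α n hmeas hindep fun i h1 h2 => (hmed i h1 h2).2))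
  have hM : μ (monotoneEvent x n)ᶜ ≤ ε := by
    rw [prob_compl_eq_one_sub (measurableSet_monotoneEvent n hmeas), tsub_le_iff_left]
    exact tsub_le_iff_right.1 hmonot
  have hgood : badᶜ ⊆ {ω | ∀ i : ℕ, 2 * i + 1 ≤ n →
      α (2 * i) ≤ x (2 * i + 1) ω ∧ (2 * i + 2 ≤ n → x (2 * i + 1) ω ≤ α (2 * i + 2))} := by
    intro ω hω i hi
    simp only [bad, Set.mem_compl_iff, Set.mem_union, Set.mem_iUnion, Set.mem_ofPred_eq, not_or,
      not_exists, not_and, not_lt] at hω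
    exact ⟨hω.1 i hi, hω.2 i⟩
  calc 1 - 2 * ε ≤ 1 - μ bad := tsub_le_tsub_left ((hhalf.measure_le hbad).trans (by gcongr)) 1
    _ = μ badᶜ := (prob_compl_eq_one_sub (oddSigma_le hmeas _ hbad)).symm
    _ ≤ _ := measure_mono hgood

theorem stmt_7 {Ω : Type*} [MeasurableSpace Ω] (μ : Measure Ω) [IsProbabilityMeasure μ]
    (n : ℕ) (x : ℕ → Ω → ℝ) (hmeas : ∀ i, Measurable (x i))
    (hindep : iIndepFun x μ)
    (ε : ℝ≥0∞) (hε : ε ≤ 1)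
    (hmonot : μ {ω | 0 ≤ x 1 ω ∧ ∀ i, 1 ≤ i → i < n → x i ω ≤ x (i + 1) ω} ≥ 1 - ε)
    (α : ℕ → ℝ) (hα0 : α 0 = 0)
    (hmed : ∀ i, 1 ≤ i → i ≤ n →
      μ {ω | α i ≤ x i ω} ≥ 1 / 2 ∧ μ {ω | x i ω ≤ α i} ≥ 1 / 2) :
    μ {ω | ∀ i : ℕ, 2 * i + 1 ≤ n →
        α (2 * i) ≤ x (2 * i + 1) ω ∧ (2 * i + 2 ≤ n → x (2 * i + 1) ω ≤ α (2 * i + 2))}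
      ≥ 1 - 2 * ε :=
  stmt_7_general μ n x hmeas hindep ε hmonot α hα0 hmed
end

section
/- Let F : ℝ → [0,1] be nondecreasing, let u̲ ≤ ū be reals, let p₁, …, p_n be reals, and set a = ∏_{i=1}^n F(p_i + ū) and b = ∏_{i=1}^n F(p_i + u̲), with a − b = 1 − ε for some ε ∈ [0,1]. Suppose there exist indices i₁, i₂ with p_{i₁} ≤ p_{i₂}, a real x ∈ [0, n] such that x·ln F(p_{i₁}+ū) + (n−x)·ln F(p_{i₂}+ū) ≥ ln a and x·ln F(p_{i₁}+u̲) + (n−x)·ln F(p_{i₂}+u̲) ≤ ln b, and that all quantities F(p_i + ū), F(p_i + u̲) are strictly positive. Then F(p_{i₁}+ū)^⌈x⌉ · F(p_{i₂}+ū)^{n−⌈x⌉} − F(p_{i₁}+u̲)^⌈x⌉ · F(p_{i₂}+u̲)^{n−⌈x⌉} ≥ 1 − 2ε. -/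
theorem stmt_9 (F : ℝ → ℝ) (hF01 : ∀ t, F t ∈ Set.Icc (0 : ℝ) 1) (hmono : Monotone F)
    (ul uu : ℝ) (hu : ul ≤ uu) (n : ℕ) (p : Fin n → ℝ) (ε : ℝ) (hε : ε ∈ Set.Icc (0 : ℝ) 1)
    (a b : ℝ) (ha : a = ∏ i, F (p i + uu)) (hb : b = ∏ i, F (p i + ul))
    (hab : a - b = 1 - ε)
    (hpos : ∀ i, 0 < F (p i + uu) ∧ 0 < F (p i + ul))
    (i₁ i₂ : Fin n) (hp12 : p i₁ ≤ p i₂) (x : ℝ) (hx : x ∈ Set.Icc (0 : ℝ) n)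
    (hconv₁ : x * Real.log (F (p i₁ + uu)) + (n - x) * Real.log (F (p i₂ + uu)) ≥ Real.log a)
    (hconv₂ : x * Real.log (F (p i₁ + ul)) + (n - x) * Real.log (F (p i₂ + ul)) ≤ Real.log b) :
    F (p i₁ + uu) ^ ⌈x⌉₊ * F (p i₂ + uu) ^ (n - ⌈x⌉₊) -
      F (p i₁ + ul) ^ ⌈x⌉₊ * F (p i₂ + ul) ^ (n - ⌈x⌉₊) ≥ 1 - 2 * ε := by
  obtain ⟨hx0, hxn⟩ := hx
  have hA1pos : 0 < F (p i₁ + uu) := (hpos i₁).1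
  have hA2pos : 0 < F (p i₂ + uu) := (hpos i₂).1
  have hB1pos : 0 < F (p i₁ + ul) := (hpos i₁).2
  have hB2pos : 0 < F (p i₂ + ul) := (hpos i₂).2
  have hA1le1 : F (p i₁ + uu) ≤ 1 := (hF01 _).2
  have hA2le1 : F (p i₂ + uu) ≤ 1 := (hF01 _).2
  have hB1le1 : F (p i₁ + ul) ≤ 1 := (hF01 _).2
  have hB2le1 : F (p i₂ + ul) ≤ 1 := (hF01 _).2
  have hB12 : F (p i₁ + ul) ≤ F (p i₂ + ul) := hmono (by linarith)
  have hapos : 0 < a := ha ▸ Finset.prod_pos (fun i _ => (hpos i).1)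
  have hbpos : 0 < b := hb ▸ Finset.prod_pos (fun i _ => (hpos i).2)
  have hale1 : a ≤ 1 := ha ▸ Finset.prod_le_one
    (fun i _ => (hpos i).1.le) (fun i _ => (hF01 _).2)
  have haA1 : a ≤ F (p i₁ + uu) := by
    rw [ha, ← Finset.mul_prod_erase _ _ (Finset.mem_univ i₁)]
    calc F (p i₁ + uu) * ∏ i ∈ Finset.univ.erase i₁, F (p i + uu)
        ≤ F (p i₁ + uu) * 1 := mul_le_mul_of_nonneg_left
          (Finset.prod_le_one (fun i _ => (hpos i).1.le) (fun i _ => (hF01 _).2)) hA1pos.le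
      _ = F (p i₁ + uu) := mul_one _
  have haeps : 1 - ε ≤ a := by nlinarith [hbpos.le]
  -- exponentiated versions of hconv₁, hconv₂ (rpow inequalities)
  have eA1 : F (p i₁ + uu) ^ x = Real.exp (x * Real.log (F (p i₁ + uu))) := by
    rw [Real.rpow_def_of_pos hA1pos, mul_comm]
  have eA2 : F (p i₂ + uu) ^ ((n : ℝ) - x)
      = Real.exp (((n : ℝ) - x) * Real.log (F (p i₂ + uu))) := by
    rw [Real.rpow_def_of_pos hA2pos, mul_comm]
  have eB1 : F (p i₁ + ul) ^ x = Real.exp (x * Real.log (F (p i₁ + ul))) := by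
    rw [Real.rpow_def_of_pos hB1pos, mul_comm]
  have eB2 : F (p i₂ + ul) ^ ((n : ℝ) - x)
      = Real.exp (((n : ℝ) - x) * Real.log (F (p i₂ + ul))) := by
    rw [Real.rpow_def_of_pos hB2pos, mul_comm]
  have upper1 : a ≤ F (p i₁ + uu) ^ x * F (p i₂ + uu) ^ ((n : ℝ) - x) := by
    have h := Real.exp_le_exp.mpr hconv₁
    rwa [Real.exp_log hapos, Real.exp_add, ← eA1, ← eA2] at h
  have lower1 : F (p i₁ + ul) ^ x * F (p i₂ + ul) ^ ((n : ℝ) - x) ≤ b := by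
    have h := Real.exp_le_exp.mpr hconv₂
    rwa [Real.exp_log hbpos, Real.exp_add, ← eB1, ← eB2] at h
  have hceiln : ⌈x⌉₊ ≤ n := Nat.ceil_le.mpr hxn
  have hxc : x ≤ (⌈x⌉₊ : ℝ) := Nat.le_ceil x
  have hcx1 : (⌈x⌉₊ : ℝ) ≤ x + 1 := (Nat.ceil_lt_add_one hx0).le
  have hcast : ((n - ⌈x⌉₊ : ℕ) : ℝ) = (n : ℝ) - (⌈x⌉₊ : ℝ) := by
    rw [Nat.cast_sub hceiln]
  -- rewrite goal nat-powers as rpow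
  have hGA : F (p i₁ + uu) ^ ⌈x⌉₊ * F (p i₂ + uu) ^ (n - ⌈x⌉₊)
      = F (p i₁ + uu) ^ ((⌈x⌉₊ : ℝ)) * F (p i₂ + uu) ^ ((n : ℝ) - (⌈x⌉₊ : ℝ)) := by
    rw [← Real.rpow_natCast (F (p i₁ + uu)), ← Real.rpow_natCast (F (p i₂ + uu)), hcast]
  have hGB : F (p i₁ + ul) ^ ⌈x⌉₊ * F (p i₂ + ul) ^ (n - ⌈x⌉₊)
      = F (p i₁ + ul) ^ ((⌈x⌉₊ : ℝ)) * F (p i₂ + ul) ^ ((n : ℝ) - (⌈x⌉₊ : ℝ)) := by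
    rw [← Real.rpow_natCast (F (p i₁ + ul)), ← Real.rpow_natCast (F (p i₂ + ul)), hcast]
  -- upper bound chain
  have hup : (1 - ε) * a
      ≤ F (p i₁ + uu) ^ ((⌈x⌉₊ : ℝ)) * F (p i₂ + uu) ^ ((n : ℝ) - (⌈x⌉₊ : ℝ)) := by
    have h1 : F (p i₁ + uu) ^ (x + 1) ≤ F (p i₁ + uu) ^ ((⌈x⌉₊ : ℝ)) :=
      Real.rpow_le_rpow_of_exponent_ge hA1pos hA1le1 hcx1
    have h2 : F (p i₂ + uu) ^ ((n : ℝ) - x) ≤ F (p i₂ + uu) ^ ((n : ℝ) - (⌈x⌉₊ : ℝ)) :=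
      Real.rpow_le_rpow_of_exponent_ge hA2pos hA2le1 (by linarith)
    have h3 : F (p i₁ + uu) ^ (x + 1) * F (p i₂ + uu) ^ ((n : ℝ) - x)
        ≤ F (p i₁ + uu) ^ ((⌈x⌉₊ : ℝ)) * F (p i₂ + uu) ^ ((n : ℝ) - (⌈x⌉₊ : ℝ)) :=
      mul_le_mul h1 h2 (Real.rpow_nonneg hA2pos.le _) (Real.rpow_nonneg hA1pos.le _)
    have h4 : F (p i₁ + uu) ^ (x + 1) * F (p i₂ + uu) ^ ((n : ℝ) - x)
        = F (p i₁ + uu) * (F (p i₁ + uu) ^ x * F (p i₂ + uu) ^ ((n : ℝ) - x)) := by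
      rw [Real.rpow_add hA1pos, Real.rpow_one]; ring
    have h5 : (1 - ε) * a
        ≤ F (p i₁ + uu) * (F (p i₁ + uu) ^ x * F (p i₂ + uu) ^ ((n : ℝ) - x)) :=
      mul_le_mul (by linarith) upper1 hapos.le hA1pos.le
    linarith [h4 ▸ h3]
  -- lower bound chain
  have hdn : F (p i₁ + ul) ^ ((⌈x⌉₊ : ℝ)) * F (p i₂ + ul) ^ ((n : ℝ) - (⌈x⌉₊ : ℝ)) ≤ b := by
    have h1 : F (p i₁ + ul) ^ ((⌈x⌉₊ : ℝ) - x) ≤ F (p i₂ + ul) ^ ((⌈x⌉₊ : ℝ) - x) :=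
      Real.rpow_le_rpow hB1pos.le hB12 (by linarith)
    have h2 : F (p i₁ + ul) ^ ((⌈x⌉₊ : ℝ)) * F (p i₂ + ul) ^ ((n : ℝ) - (⌈x⌉₊ : ℝ))
        = (F (p i₁ + ul) ^ x * F (p i₂ + ul) ^ ((n : ℝ) - (⌈x⌉₊ : ℝ)))
            * F (p i₁ + ul) ^ ((⌈x⌉₊ : ℝ) - x) := by
      have e : F (p i₁ + ul) ^ x * F (p i₁ + ul) ^ ((⌈x⌉₊ : ℝ) - x)
          = F (p i₁ + ul) ^ ((⌈x⌉₊ : ℝ)) := by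
        rw [← Real.rpow_add hB1pos]; ring_nf
      rw [← e]; ring
    have h3 : (F (p i₁ + ul) ^ x * F (p i₂ + ul) ^ ((n : ℝ) - (⌈x⌉₊ : ℝ)))
            * F (p i₁ + ul) ^ ((⌈x⌉₊ : ℝ) - x)
        ≤ (F (p i₁ + ul) ^ x * F (p i₂ + ul) ^ ((n : ℝ) - (⌈x⌉₊ : ℝ)))
            * F (p i₂ + ul) ^ ((⌈x⌉₊ : ℝ) - x) :=
      mul_le_mul_of_nonneg_left h1
        (mul_nonneg (Real.rpow_nonneg hB1pos.le _) (Real.rpow_nonneg hB2pos.le _))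
    have h4 : (F (p i₁ + ul) ^ x * F (p i₂ + ul) ^ ((n : ℝ) - (⌈x⌉₊ : ℝ)))
            * F (p i₂ + ul) ^ ((⌈x⌉₊ : ℝ) - x)
        = F (p i₁ + ul) ^ x * F (p i₂ + ul) ^ ((n : ℝ) - x) := by
      have e : F (p i₂ + ul) ^ ((n : ℝ) - (⌈x⌉₊ : ℝ)) * F (p i₂ + ul) ^ ((⌈x⌉₊ : ℝ) - x)
          = F (p i₂ + ul) ^ ((n : ℝ) - x) := by
        rw [← Real.rpow_add hB2pos]; ring_nf
      rw [mul_assoc, e]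
    calc F (p i₁ + ul) ^ ((⌈x⌉₊ : ℝ)) * F (p i₂ + ul) ^ ((n : ℝ) - (⌈x⌉₊ : ℝ))
        ≤ (F (p i₁ + ul) ^ x * F (p i₂ + ul) ^ ((n : ℝ) - (⌈x⌉₊ : ℝ)))
            * F (p i₂ + ul) ^ ((⌈x⌉₊ : ℝ) - x) := h2 ▸ h3
      _ = F (p i₁ + ul) ^ x * F (p i₂ + ul) ^ ((n : ℝ) - x) := h4
      _ ≤ b := lower1
  have key : 1 - 2 * ε ≤ (1 - ε) * a - b := by
    nlinarith [mul_nonneg hε.1 (sub_nonneg.mpr hale1)]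
  rw [hGA, hGB]
  linarith [hup, hdn, key]
end

section
/- Let F : ℝ → [0,1] be nondecreasing and let p̄ ≥ 0 and a finite multiset S of prices satisfy 1 − ∏_{p ∈ S} F(p) ≤ 1/12 < 1 − F(p̄) · ∏_{p ∈ S} F(p). Then with q = 1 − F(p̄)·∏_{p∈S} F(p), we have p̄/12 ≤ q · p̄, and q · p̄ is at most the greedy revenue of the menu S ∪ {p̄}; i.e., p̄/12 ≤ E_v[max{ p ∈ S ∪ {p̄} : v_p ≥ p }], where the values v_p are i.i.d. with CDF F and the max of the empty set is 0. -/
/-!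
Let `A` be the event that some item of the menu is affordable, `P i ≤ v i`. On `A` the greedy
revenue is at least `min P ≥ p̄`, and off `A` it is nonnegative, so its expectation is at least
`p̄ · μ(A)`. The complement of `A` is contained in `⋂ i, {v i ≤ P i}`, whose probability is
`∏ i, F (P i) = F p̄ · ∏_{p ∈ S} F p` by independence; hence `μ(A) ≥ q > 1/12`.
-/

open MeasureTheory ProbabilityTheory

section GreedyRevenue

variable {ι Ω : Type*}

noncomputable def greedyRevenue (P : ι → ℝ) (v : ι → Ω → ℝ) (ω : Ω) : ℝ :=
  sSup ({x | ∃ i, x = P i ∧ P i ≤ v i ω} ∪ {0})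

lemma greedyRevenue_eq_max_iSup [Finite ι] [Nonempty ι] (P : ι → ℝ) (v : ι → Ω → ℝ) (ω : Ω) :
    greedyRevenue P v ω = max 0 (⨆ i, if P i ≤ v i ω then P i else 0) := by
  have hset : ({x | ∃ i, x = P i ∧ P i ≤ v i ω} ∪ {0} : Set ℝ) =
      insert 0 (Set.range fun i => if P i ≤ v i ω then P i else 0) := by
    ext x
    simp only [Set.mem_union, Set.mem_ofPred_eq, Set.mem_singleton_iff, Set.mem_insert_iff,
      Set.mem_range]
    constructor
    · rintro (⟨i, rfl, hi⟩ | rfl)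
      · exact Or.inr ⟨i, if_pos hi⟩
      · exact Or.inl rfl
    · rintro (rfl | ⟨i, rfl⟩)
      · exact Or.inr rfl
      · split_ifs with hi
        exacts [Or.inl ⟨i, rfl, hi⟩, Or.inr rfl]
  rw [greedyRevenue, hset, csSup_insert (Set.finite_range _).bddAbove (Set.range_nonempty _)]
  rfl

lemma greedyRevenue_le_sum_abs [Fintype ι] (P : ι → ℝ) (v : ι → Ω → ℝ) (ω : Ω) :
    greedyRevenue P v ω ≤ ∑ i, |P i| := by
  have hsum : 0 ≤ ∑ i, |P i| := Finset.sum_nonneg fun i _ => abs_nonneg (P i)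
  refine csSup_le ⟨0, Or.inr rfl⟩ ?_
  rintro x (⟨i, rfl, -⟩ | rfl)
  · exact (le_abs_self (P i)).trans
      (Finset.single_le_sum (fun j _ => abs_nonneg (P j)) (Finset.mem_univ i))
  · exact hsum

variable [Finite ι]

lemma bddAbove_greedyRevenue_set (P : ι → ℝ) (v : ι → Ω → ℝ) (ω : Ω) :
    BddAbove ({x | ∃ i, x = P i ∧ P i ≤ v i ω} ∪ {0}) := by
  refine ((Set.finite_range P).union (Set.finite_singleton 0)).subset ?_ |>.bddAbove
  rintro x (⟨j, rfl, -⟩ | hx)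
  exacts [Or.inl ⟨j, rfl⟩, Or.inr hx]

lemma le_greedyRevenue {P : ι → ℝ} {v : ι → Ω → ℝ} {ω : Ω} {i : ι} (hi : P i ≤ v i ω) :
    P i ≤ greedyRevenue P v ω :=
  le_csSup (bddAbove_greedyRevenue_set P v ω) (Or.inl ⟨i, rfl, hi⟩)

lemma greedyRevenue_nonneg (P : ι → ℝ) (v : ι → Ω → ℝ) (ω : Ω) :
    0 ≤ greedyRevenue P v ω :=
  le_csSup (bddAbove_greedyRevenue_set P v ω) (Or.inr rfl)

variable [MeasurableSpace Ω]

lemma measurable_greedyRevenue [Nonempty ι] (P : ι → ℝ) {v : ι → Ω → ℝ}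
    (hv : ∀ i, Measurable (v i)) : Measurable (greedyRevenue P v) := by
  simp_rw [funext (greedyRevenue_eq_max_iSup P v)]
  refine measurable_const.max (Measurable.iSup fun i => ?_)
  exact Measurable.ite (measurableSet_le measurable_const (hv i)) measurable_const measurable_const

lemma integrable_greedyRevenue [Nonempty ι] (μ : Measure Ω) [IsFiniteMeasure μ] (P : ι → ℝ)
    {v : ι → Ω → ℝ} (hv : ∀ i, Measurable (v i)) : Integrable (greedyRevenue P v) μ := by
  have := Fintype.ofFinite ι
  refine .of_bound (measurable_greedyRevenue P hv).aestronglyMeasurable (∑ i, |P i|) ?_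
  refine .of_forall fun ω => ?_
  rw [Real.norm_of_nonneg (greedyRevenue_nonneg P v ω)]
  exact greedyRevenue_le_sum_abs P v ω

lemma mul_measureReal_le_integral_greedyRevenue [Nonempty ι] (μ : Measure Ω) [IsFiniteMeasure μ]
    {P : ι → ℝ} {v : ι → Ω → ℝ} (hv : ∀ i, Measurable (v i)) {c : ℝ}
    (hcP : ∀ i, c ≤ P i) :
    μ.real (⋃ i, {ω | P i ≤ v i ω}) * c ≤ ∫ ω, greedyRevenue P v ω ∂μ := by
  set A := ⋃ i, {ω | P i ≤ v i ω}
  have hA : MeasurableSet A := .iUnion fun i => measurableSet_le measurable_const (hv i)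
  have hle : A.indicator (fun _ => c) ≤ greedyRevenue P v := by
    intro ω
    by_cases hω : ω ∈ A
    · obtain ⟨i, hi⟩ := Set.mem_iUnion.mp hω
      rw [Set.indicator_of_mem hω]
      exact (hcP i).trans (le_greedyRevenue hi)
    · rw [Set.indicator_of_notMem hω]
      exact greedyRevenue_nonneg P v ω
  calc μ.real A * c = ∫ ω, A.indicator (fun _ => c) ω ∂μ := by
        rw [integral_indicator_const c hA, smul_eq_mul]
    _ ≤ ∫ ω, greedyRevenue P v ω ∂μ :=
        integral_mono ((integrable_const c).indicator hA) (integrable_greedyRevenue μ P hv) hle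

end GreedyRevenue

lemma one_sub_prod_le_measureReal_iUnion {ι Ω : Type*} [Fintype ι] [MeasurableSpace Ω]
    {μ : Measure Ω} [IsProbabilityMeasure μ] {v : ι → Ω → ℝ} (hv : ∀ i, Measurable (v i))
    (hindep : iIndepFun v μ) (t : ι → ℝ) :
    1 - ∏ i, μ.real {ω | v i ω ≤ t i} ≤ μ.real (⋃ i, {ω | t i ≤ v i ω}) := by
  have hA : MeasurableSet (⋃ i, {ω | t i ≤ v i ω}) :=
    .iUnion fun i => measurableSet_le measurable_const (hv i)
  have hcompl : (⋃ i, {ω | t i ≤ v i ω})ᶜ ⊆ ⋂ i, v i ⁻¹' Set.Iic (t i) := by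
    simp only [Set.compl_iUnion, Set.compl_ofPred, not_le]
    exact Set.iInter_mono fun i ω (hω : v i ω < t i) => hω.le
  have hprod : μ.real (⋂ i, v i ⁻¹' Set.Iic (t i)) = ∏ i, μ.real {ω | v i ω ≤ t i} := by
    have := hindep.measure_inter_preimage_eq_mul Finset.univ (sets := fun i => Set.Iic (t i))
      fun i _ => measurableSet_Iic
    simp only [Finset.mem_univ, Set.iInter_true] at this
    rw [measureReal_def, this, ENNReal.toReal_prod]
    rfl
  have := measureReal_mono (μ := μ) hcompl
  rw [probReal_compl_eq_one_sub hA, hprod] at this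
  linarith

theorem stmt_14_general {Ω : Type*} [MeasurableSpace Ω] (μ : Measure Ω) [IsProbabilityMeasure μ]
    (F : ℝ → ℝ)
    (n : ℕ) (P : Fin (n + 1) → ℝ) (pbar : ℝ) (hpbar : 0 ≤ pbar)
    (hlast : P (Fin.last n) = pbar)
    (hexp : ∀ i : Fin (n + 1), pbar ≤ P i)
    (hS' : (1 : ℝ) / 12 < 1 - F pbar * ∏ i : Fin n, F (P i.castSucc))
    (v : Fin (n + 1) → Ω → ℝ) (hmeas : ∀ i, Measurable (v i))
    (hindep : iIndepFun v μ)
    (hcdf : ∀ i (t : ℝ), (μ {ω | v i ω ≤ t}).toReal = F t)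
    (q : ℝ) (hq : q = 1 - F pbar * ∏ i : Fin n, F (P i.castSucc)) :
    pbar / 12 ≤ q * pbar ∧
      q * pbar ≤ ∫ ω, sSup ({x | ∃ i, x = P i ∧ P i ≤ v i ω} ∪ {0}) ∂μ := by
  subst hq
  refine ⟨by nlinarith, ?_⟩
  have hprod : ∏ i, μ.real {ω | v i ω ≤ P i} = F pbar * ∏ i : Fin n, F (P i.castSucc) := by
    rw [Fin.prod_univ_castSucc, hlast, mul_comm]
    simp only [measureReal_def, hcdf]
  calc (1 - F pbar * ∏ i : Fin n, F (P i.castSucc)) * pbar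
      ≤ μ.real (⋃ i, {ω | P i ≤ v i ω}) * pbar := by
        rw [← hprod]
        exact mul_le_mul_of_nonneg_right
          (one_sub_prod_le_measureReal_iUnion hmeas hindep P) hpbar
    _ ≤ ∫ ω, greedyRevenue P v ω ∂μ :=
        mul_measureReal_le_integral_greedyRevenue μ hmeas hexp

theorem stmt_14 {Ω : Type*} [MeasurableSpace Ω] (μ : Measure Ω) [IsProbabilityMeasure μ]
    (F : ℝ → ℝ) (hmono : Monotone F) (hF01 : ∀ t, F t ∈ Set.Icc (0 : ℝ) 1)
    (n : ℕ) (P : Fin (n + 1) → ℝ) (pbar : ℝ) (hpbar : 0 ≤ pbar)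
    (hlast : P (Fin.last n) = pbar)
    (hexp : ∀ i : Fin (n + 1), pbar ≤ P i)
    (hS : 1 - ∏ i : Fin n, F (P i.castSucc) ≤ 1 / 12)
    (hS' : (1 : ℝ) / 12 < 1 - F pbar * ∏ i : Fin n, F (P i.castSucc))
    (v : Fin (n + 1) → Ω → ℝ) (hmeas : ∀ i, Measurable (v i))
    (hindep : iIndepFun v μ)
    (hcdf : ∀ i (t : ℝ), (μ {ω | v i ω ≤ t}).toReal = F t)
    (q : ℝ) (hq : q = 1 - F pbar * ∏ i : Fin n, F (P i.castSucc)) :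
    pbar / 12 ≤ q * pbar ∧
      q * pbar ≤ ∫ ω, sSup ({x | ∃ i, x = P i ∧ P i ≤ v i ω} ∪ {0}) ∂μ :=
  stmt_14_general μ F n P pbar hpbar hlast hexp hS' v hmeas hindep hcdf q hq
end
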